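/- arXiv:1106.5279 — 4 statements merged into one kernel-verified Lean document; each statement's English description precedes it below -/
import Mathlib

section
/- For any embedded graph G (ribbon graph), the Penrose polynomial satisfies P(G;λ) = Σ_{A ⊆ E(G)} (−1)^{|A|} λ^{f(G^{τ(A)})}, where G^{τ(A)} is the partial Petrial of G obtained by giving a half-twist to each edge in A, and f denotes the number of boundary components of the ribbon graph. -/
open Polynomial

namespace Penrose

/-- Addition in the Klein four-group `Bool × Bool` (componentwise xor). -/
def kAdd (p q : Bool × Bool) : Bool × Bool := (xor p.1 q.1, xor p.2 q.2)

lemma kAdd_eq_zero_iff : ∀ p q : Bool × Bool, kAdd p q = (false, false) ↔ p = q := by decide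
lemma kAdd_eq_right_iff : ∀ p q : Bool × Bool, kAdd p q = q ↔ p = (false, false) := by decide
lemma kAdd_kAdd : ∀ p q : Bool × Bool, kAdd (kAdd p q) q = p := by decide

/-- The flags (corner triples) of a ribbon graph with edge set `E`: each edge carries
four flags. -/
abbrev Flags (E : Type) := E × Bool × Bool

/-- A ribbon graph (cellularly embedded graph, possibly non-orientable) with edge set `E`,
in the flag (graph-encoded map) model.  The involution `σ0` (crossing edge `e`) acts on the
four flags of `e` by adding `a e` in the Klein four-group, the involution `σ2` (switching
sides of `e`) by adding `b e`, and the fixed-point-free involution `s1` (moving to the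
adjacent edge-end in the same vertex-face corner) is given as data.
Vertices are the orbits of `⟨s1, σ2⟩`, edges the orbits of `⟨σ0, σ2⟩`, and the faces
(boundary components) the orbits of `⟨σ0, s1⟩`. -/
structure RibbonGraph (E : Type) where
  s1 : Flags E → Flags E
  s1_invol : ∀ f, s1 (s1 f) = f
  s1_ne : ∀ f, s1 f ≠ f
  a : E → Bool × Bool
  b : E → Bool × Bool
  a_ne : ∀ e, a e ≠ (false, false)
  b_ne : ∀ e, b e ≠ (false, false)
  ab_ne : ∀ e, a e ≠ b e

namespace RibbonGraph

variable {E : Type}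

/-- The involution crossing an edge. -/
def σ0 (G : RibbonGraph E) (f : Flags E) : Flags E := (f.1, kAdd f.2 (G.a f.1))

/-- The involution changing the side (face) of an edge, staying at the same vertex. -/
def σ2 (G : RibbonGraph E) (f : Flags E) : Flags E := (f.1, kAdd f.2 (G.b f.1))

lemma σ2_σ2 (G : RibbonGraph E) (f : Flags E) : G.σ2 (G.σ2 f) = f := by
  cases f with
  | mk e p => simp [σ2, kAdd_kAdd]

/-- The partial Petrial `G^{τ(A)}`: give a half-twist to every edge in `A`
(replace `σ0` by `σ0 σ2` on the flags of the edges of `A`). -/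
def petrial [DecidableEq E] (G : RibbonGraph E) (A : Finset E) : RibbonGraph E where
  s1 := G.s1
  s1_invol := G.s1_invol
  s1_ne := G.s1_ne
  a := fun e => if e ∈ A then kAdd (G.a e) (G.b e) else G.a e
  b := G.b
  a_ne := by
    intro e
    by_cases h : e ∈ A
    · simpa [h, kAdd_eq_zero_iff] using G.ab_ne e
    · simpa [h] using G.a_ne e
  b_ne := G.b_ne
  ab_ne := by
    intro e
    by_cases h : e ∈ A
    · simpa [h, kAdd_eq_right_iff] using G.a_ne e
    · simpa [h] using G.ab_ne e

/-- The partial dual `G^{δ(A)}`: swap the roles of `σ0` and `σ2` on the flags of the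
edges of `A`. -/
def pdual [DecidableEq E] (G : RibbonGraph E) (A : Finset E) : RibbonGraph E where
  s1 := G.s1
  s1_invol := G.s1_invol
  s1_ne := G.s1_ne
  a := fun e => if e ∈ A then G.b e else G.a e
  b := fun e => if e ∈ A then G.a e else G.b e
  a_ne := by
    intro e
    by_cases h : e ∈ A
    · simpa [h] using G.b_ne e
    · simpa [h] using G.a_ne e
  b_ne := by
    intro e
    by_cases h : e ∈ A
    · simpa [h] using G.a_ne e
    · simpa [h] using G.b_ne e
  ab_ne := by
    intro e
    by_cases h : e ∈ A
    · simpa [h] using (G.ab_ne e).symm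
    · simpa [h] using G.ab_ne e

/-- One step of the boundary (face) walk. -/
def faceStep (G : RibbonGraph E) (x y : Flags E) : Prop := y = G.σ0 x ∨ y = G.s1 x

/-- The number of faces (boundary components) of `G`. -/
noncomputable def nFaces (G : RibbonGraph E) : ℕ := Nat.card (Quot G.faceStep)

/-- One step of the walk around a vertex. -/
def vertStep (G : RibbonGraph E) (x y : Flags E) : Prop := y = G.σ2 x ∨ y = G.s1 x

/-- The number of vertices of `G`. -/
noncomputable def nVerts (G : RibbonGraph E) : ℕ := Nat.card (Quot G.vertStep)

/-- The number of edges of `G`. -/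
noncomputable def nEdges (_G : RibbonGraph E) : ℕ := Nat.card E

/-- One step of a walk in (the total space of) `G`. -/
def compStep (G : RibbonGraph E) (x y : Flags E) : Prop :=
  y = G.σ0 x ∨ y = G.σ2 x ∨ y = G.s1 x

/-- The number of connected components of `G`. -/
noncomputable def nComps (G : RibbonGraph E) : ℕ := Nat.card (Quot G.compStep)

/-- Two flags lie at the same vertex. -/
def VertexConn (G : RibbonGraph E) : Flags E → Flags E → Prop := Relation.EqvGen G.vertStep

/-- `G` is connected. -/
def Connected (G : RibbonGraph E) : Prop := ∀ x y : Flags E, Relation.EqvGen G.compStep x y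

/-- `G` is cubic: every vertex has exactly three edge-ends, i.e. six flags. -/
def Cubic (G : RibbonGraph E) : Prop :=
  ∀ x : Flags E, Nat.card {y : Flags E // G.VertexConn x y} = 6

/-- `G` is orientable. -/
def Orientable (G : RibbonGraph E) : Prop :=
  ∃ o : Flags E → Bool, ∀ f, o (G.σ0 f) = !(o f) ∧ o (G.σ2 f) = !(o f) ∧ o (G.s1 f) = !(o f)

/-- `G` is a plane graph: orientable and of total genus `0` (Euler's formula). -/
def Plane (G : RibbonGraph E) : Prop :=
  G.Orientable ∧ G.nVerts + G.nFaces = G.nEdges + 2 * G.nComps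

/-- `G` is checkerboard colourable: its faces admit a proper 2-colouring. -/
def CheckerboardColourable (G : RibbonGraph E) : Prop :=
  ∃ c : Flags E → Bool, ∀ f, c (G.σ0 f) = c f ∧ c (G.s1 f) = c f ∧ c (G.σ2 f) = !(c f)

/-- The (topological) Penrose polynomial
`P(G;λ) = ∑_{A ⊆ E(G)} (−1)^{|A|} λ^{f(G^{τ(A)})}`. -/
noncomputable def penrose [Fintype E] [DecidableEq E] (G : RibbonGraph E) : Polynomial ℤ :=
  ∑ A ∈ (Finset.univ : Finset E).powerset,
    (-1 : Polynomial ℤ) ^ A.card * X ^ (G.petrial A).nFaces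

/-- The boundary-crossing involution of `G − e`: pass through the deleted edge `e`
via `σ2`, and cross any other edge via `σ0`. -/
def delσ0 [DecidableEq E] (G : RibbonGraph E) (e : E) (f : Flags E) : Flags E :=
  if f.1 = e then G.σ2 f else G.σ0 f

/-- One step of the boundary walk of `G − e`. -/
def faceStepDel [DecidableEq E] (G : RibbonGraph E) (e : E) (x y : Flags E) : Prop :=
  y = G.delσ0 e x ∨ y = G.s1 x

/-- The number of faces (boundary components) of `G − e`. -/
noncomputable def nFacesDel [DecidableEq E] (G : RibbonGraph E) (e : E) : ℕ :=
  Nat.card (Quot (G.faceStepDel e))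

/-- The Penrose polynomial `P(G − e; λ)` of the graph obtained from `G` by deleting the
edge `e`. -/
noncomputable def penroseDel [Fintype E] [DecidableEq E] (G : RibbonGraph E) (e : E) :
    Polynomial ℤ :=
  ∑ A ∈ ((Finset.univ : Finset E).erase e).powerset,
    (-1 : Polynomial ℤ) ^ A.card * X ^ ((G.petrial A).nFacesDel e)

/-- The Penrose polynomial `P(G/e; λ)` of the contraction `G/e := G^{δ(e)} − e`. -/
noncomputable def penroseContr [Fintype E] [DecidableEq E] (G : RibbonGraph E) (e : E) :
    Polynomial ℤ :=
  (G.pdual {e}).penroseDel e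

/-- One step of a walk in `G − e` (together with the leftover vertices of `e`). -/
def compStepDel (G : RibbonGraph E) (e : E) (x y : Flags E) : Prop :=
  (x.1 ≠ e ∧ y = G.σ0 x) ∨ y = G.σ2 x ∨ y = G.s1 x

/-- The number of connected components of `G − e`. -/
noncomputable def nCompsDel (G : RibbonGraph E) (e : E) : ℕ :=
  Nat.card (Quot (G.compStepDel e))

/-- The edge `e` is a bridge of `G`: deleting it increases the number of connected
components. -/
def IsBridge (G : RibbonGraph E) (e : E) : Prop := G.nComps < G.nCompsDel e

/-- The edge `e` is a non-twisted loop bounding a 2-cell (a trivial loop): one of its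
sides is a face traversing only `e`, once. -/
def IsTrivialLoop (G : RibbonGraph E) (e : E) : Prop :=
  ∃ p : Bool × Bool, G.s1 (e, p) = G.σ0 (e, p)

/-- Isomorphism (equivalence) of ribbon graphs over the same edge set. -/
def IsIso (G H : RibbonGraph E) : Prop :=
  ∃ ψ : Flags E ≃ Flags E, (∀ f, ψ (G.s1 f) = H.s1 (ψ f)) ∧
    (∀ f, ψ (G.σ0 f) = H.σ0 (ψ f)) ∧ (∀ f, ψ (G.σ2 f) = H.σ2 (ψ f))

/-- Given a Penrose state `σ` of the medial graph `G_m` (a choice, at the medial vertex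
`v_e` of each edge `e` of `G`, of the crossing transition if `σ e = true` and of the white
split otherwise), the transition used at `v_e` by the closed curves of the state. -/
def stateσ0 (G : RibbonGraph E) (σ : E → Bool) (f : Flags E) : Flags E :=
  if σ f.1 then G.σ0 (G.σ2 f) else G.σ0 f

/-- The number `c(s)` of closed curves of the Penrose state `σ` of the medial graph. -/
noncomputable def stateCurves (G : RibbonGraph E) (σ : E → Bool) : ℕ :=
  Nat.card (Quot (fun x y : Flags E => y = G.stateσ0 σ x ∨ y = G.s1 x))

/-- A `k`-valuation of the medial graph `G_m`: an edge colouring of `G_m` (edges of `G_m`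
correspond to `s1`-orbits of flags of `G`). -/
def IsValuation {n : ℕ} (G : RibbonGraph E) (c : Flags E → Fin n) : Prop :=
  ∀ f, c (G.s1 f) = c f

/-- The medial vertex `v_e` is total in the valuation `c`: all four incident medial edges
receive the same colour. -/
def TotalAt {n : ℕ} (G : RibbonGraph E) (c : Flags E → Fin n) (e : E) : Prop :=
  ∀ p q : Bool × Bool, c (e, p) = c (e, q)

/-- The medial vertex `v_e` has white-split type with two distinct colours. -/
def WhiteAt {n : ℕ} (G : RibbonGraph E) (c : Flags E → Fin n) (e : E) : Prop :=
  (∀ p : Bool × Bool, c (G.σ0 (e, p)) = c (e, p)) ∧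
    c (e, (false, false)) ≠ c (G.σ2 (e, (false, false)))

/-- The medial vertex `v_e` has crossing type with two distinct colours. -/
def CrossAt {n : ℕ} (G : RibbonGraph E) (c : Flags E → Fin n) (e : E) : Prop :=
  (∀ p : Bool × Bool, c (G.σ0 (G.σ2 (e, p))) = c (e, p)) ∧
    c (e, (false, false)) ≠ c (G.σ0 (e, (false, false)))

/-- An admissible valuation: at every medial vertex the two monochromatic pairs have
distinct colours and form a white split or a crossing. -/
def Admissible {n : ℕ} (G : RibbonGraph E) (c : Flags E → Fin n) : Prop :=
  G.IsValuation c ∧ ∀ e : E, G.WhiteAt c e ∨ G.CrossAt c e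

/-- A permissible valuation: every medial vertex is of white-split, crossing or total
type. -/
def Permissible {n : ℕ} (G : RibbonGraph E) (c : Flags E → Fin n) : Prop :=
  G.IsValuation c ∧ ∀ e : E, G.WhiteAt c e ∨ G.CrossAt c e ∨ G.TotalAt c e

/-- The number of crossing-type medial vertices of a valuation. -/
noncomputable def crCount {n : ℕ} (G : RibbonGraph E) (c : Flags E → Fin n) : ℕ :=
  Nat.card {e : E // G.CrossAt c e}

/-- The number of total medial vertices of a valuation. -/
noncomputable def totCount {n : ℕ} (G : RibbonGraph E) (c : Flags E → Fin n) : ℕ :=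
  Nat.card {e : E // G.TotalAt c e}

/-- A proper edge 3-colouring of `G`: edges meeting at a vertex get distinct colours. -/
def ProperEdge3Coloring (G : RibbonGraph E) (κ : E → Fin 3) : Prop :=
  ∀ e e' : E, e ≠ e' →
    (∃ p q : Bool × Bool, G.VertexConn (e, p) (e', q)) → κ e ≠ κ e'

/-- The circuit partition polynomial `j(G_m^P ; x)` of the Penrose directed medial graph
of an oriented checkerboard coloured graph `G`: its states are exactly the Penrose states
of `G_m`, so `j(G_m^P ; x) = ∑_s x^{c(s)} = ∑_{A ⊆ E(G)} x^{f(G^{τ(A)})}`. -/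
noncomputable def circuitPartitionMedial [Fintype E] [DecidableEq E] (G : RibbonGraph E) :
    Polynomial ℤ :=
  ∑ A ∈ (Finset.univ : Finset E).powerset, X ^ (G.petrial A).nFaces

/-- The faces of `G`, i.e. the vertices of the geometric dual `G*`. -/
def Face (G : RibbonGraph E) := Quot G.faceStep

instance [Finite E] (G : RibbonGraph E) : Finite (Face G) :=
  Finite.of_surjective (Quot.mk _) (fun q => Quot.exists_rep q)

/-- The underlying simple graph of the geometric dual `G*`: vertices are the faces of `G`,
two distinct faces being adjacent when they share an edge. -/
def dualGraph (G : RibbonGraph E) : SimpleGraph (Face G) where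
  Adj x y := x ≠ y ∧ ∃ g : Flags E, x = Quot.mk _ g ∧ y = Quot.mk _ (G.σ2 g)
  symm := ⟨by
    rintro x y ⟨hxy, g, hx, hy⟩
    exact ⟨Ne.symm hxy, G.σ2 g, hy, by rw [σ2_σ2]; exact hx⟩⟩
  loopless := ⟨by rintro x ⟨h, -⟩; exact h rfl⟩

/-- The chromatic polynomial of a finite simple graph, via Whitney's rank expansion:
`χ(H;λ) = ∑_{S ⊆ E(H)} (−1)^{|S|} λ^{c(S)}`, where `c(S)` is the number of connected
components of the spanning subgraph with edge set `S`. -/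
noncomputable def chromPoly {V : Type} [Finite V] (H : SimpleGraph V) : Polynomial ℤ := by
  classical
  haveI := Fintype.ofFinite V
  exact ∑ S ∈ ((Finset.univ : Finset (Sym2 V)).filter (· ∈ H.edgeSet)).powerset,
    (-1 : Polynomial ℤ) ^ S.card * X ^ (Nat.card (Quot (fun x y : V => s(x, y) ∈ S)))

/-- The chromatic polynomial `χ(G*; λ)` of the geometric dual of `G` (as a multigraph:
it is `0` when `G*` has a loop, i.e. when some edge of `G` has the same face on both of
its sides, and otherwise it is the chromatic polynomial of the underlying simple graph
of `G*`). -/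
noncomputable def dualChrom [Finite E] (G : RibbonGraph E) : Polynomial ℤ := by
  classical
  exact if ∃ g : Flags E, Quot.mk G.faceStep (G.σ2 g) = Quot.mk G.faceStep g then 0
    else chromPoly G.dualGraph


lemma kAdd_rot : ∀ p a b : Bool × Bool, kAdd (kAdd p b) a = kAdd p (kAdd a b) := by decide

lemma stateσ0_eq_petrial_σ0 {E : Type} [Fintype E] [DecidableEq E] (G : RibbonGraph E) (σ : E → Bool) :
    G.stateσ0 σ = (G.petrial (Finset.univ.filter (fun e => σ e = true))).σ0 := by
  funext f
  by_cases h : σ f.1 = true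
  · simp [stateσ0, petrial, σ0, σ2, h, kAdd_rot]
  · simp [stateσ0, petrial, σ0, h]

lemma stateCurves_eq {E : Type} [Fintype E] [DecidableEq E] (G : RibbonGraph E) (σ : E → Bool) :
    G.stateCurves σ = (G.petrial (Finset.univ.filter (fun e => σ e = true))).nFaces := by
  unfold stateCurves nFaces
  congr 1
  congr 1
  funext x y
  rw [faceStep, stateσ0_eq_petrial_σ0]
  rfl

/-- The Penrose polynomial, defined as the state sum
`P(G;λ) = ∑_{s ∈ P(G_m)} (−1)^{cr(s)} λ^{c(s)}` over the Penrose states of the medial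
graph of `G` (a Penrose state chooses a white split or a crossing at each medial vertex),
satisfies `P(G;λ) = ∑_{A ⊆ E(G)} (−1)^{|A|} λ^{f(G^{τ(A)})}`. -/
theorem stmt2 {E : Type} [Fintype E] [DecidableEq E] (G : RibbonGraph E) :
    (∑ σ : E → Bool,
        (-1 : Polynomial ℤ) ^ ((Finset.univ.filter (fun e => σ e = true)).card) *
          X ^ G.stateCurves σ) =
      ∑ A ∈ (Finset.univ : Finset E).powerset,
        (-1 : Polynomial ℤ) ^ A.card * X ^ (G.petrial A).nFaces := by
  rw [Finset.powerset_univ]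
  refine Fintype.sum_bijective (fun σ : E → Bool => Finset.univ.filter (fun e => σ e = true))
    ?_ _ _ ?_
  · constructor
    · intro σ τ h
      funext e
      have := Finset.ext_iff.mp h e
      simpa using this
    · intro A
      exact ⟨fun e => e ∈ A, by ext e; simp⟩
  · intro σ
    rw [stateCurves_eq]

end RibbonGraph

end Penrose
end

section
/- For any embedded graph G, any subset A ⊆ E(G), and the partial Petrial G^{τ(A)}, the Penrose polynomial satisfies P(G;λ) = (−1)^{|A|} P(G^{τ(A)};λ). -/
open Polynomial

namespace Penrose

namespace RibbonGraph

variable {E : Type}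

lemma nFaces_congr {E : Type} (G H : RibbonGraph E) (h1 : G.s1 = H.s1) (ha : G.a = H.a) :
    G.nFaces = H.nFaces := by
  have : G.faceStep = H.faceStep := by
    funext x y; simp [faceStep, σ0, h1, ha]
  simp [nFaces, this]

lemma petrial_petrial_nFaces {E : Type} [DecidableEq E] (G : RibbonGraph E) (A B : Finset E) :
    ((G.petrial A).petrial B).nFaces = (G.petrial (symmDiff A B)).nFaces := by
  apply nFaces_congr
  · rfl
  funext e
  by_cases hA : e ∈ A <;> by_cases hB : e ∈ B <;>
    simp [petrial, hA, hB, Finset.mem_symmDiff, kAdd_kAdd]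

lemma neg_one_pow_symmDiff {E : Type} [DecidableEq E] (A B : Finset E) :
    (-1 : Polynomial ℤ) ^ (symmDiff A B).card = (-1) ^ A.card * (-1) ^ B.card := by
  have hd : (symmDiff A B).card = (A \ B).card + (B \ A).card := by
    rw [symmDiff_def, Finset.sup_eq_union,
      Finset.card_union_of_disjoint disjoint_sdiff_sdiff]
  have h1 := Finset.card_sdiff_add_card_inter A B
  have h2 := Finset.card_sdiff_add_card_inter B A
  rw [Finset.inter_comm] at h2
  have h : A.card + B.card = (symmDiff A B).card + 2 * (A ∩ B).card := by omega
  have := congrArg (fun n => (-1 : Polynomial ℤ) ^ n) h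
  simp only [pow_add, pow_mul, neg_one_sq, one_pow, mul_one] at this
  exact this.symm

/-- For any embedded graph `G` and `A ⊆ E(G)`,
`P(G;λ) = (−1)^{|A|} P(G^{τ(A)};λ)`. -/
theorem stmt3 {E : Type} [Fintype E] [DecidableEq E] (G : RibbonGraph E) (A : Finset E) :
    G.penrose = (-1 : Polynomial ℤ) ^ A.card * (G.petrial A).penrose := by
  unfold penrose
  rw [Finset.mul_sum]
  refine Finset.sum_nbij' (fun B => symmDiff A B) (fun B => symmDiff A B) ?_ ?_ ?_ ?_ ?_
  · intro B _; simp
  · intro B _; simp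
  · intro B _; simp [symmDiff_symmDiff_cancel_left]
  · intro B _; simp [symmDiff_symmDiff_cancel_left]
  · intro B _
    rw [petrial_petrial_nFaces, symmDiff_symmDiff_cancel_left, neg_one_pow_symmDiff,
      ← mul_assoc, ← mul_assoc]
    have h1 : ((-1 : Polynomial ℤ)) ^ A.card * (-1) ^ A.card = 1 := by
      rw [← pow_add]; exact Even.neg_one_pow ⟨A.card, rfl⟩
    rw [h1, one_mul]

end RibbonGraph

end Penrose
end

section
/- For any embedded graph G and any edge e, the Penrose polynomial satisfies the twisted duality relation P(G;λ) = P(G^{δ(e)};λ) − P(G^{δτ(e)};λ). -/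
open Polynomial

namespace Penrose

namespace RibbonGraph

variable {E : Type}

lemma kAdd_comm' : ∀ p q : Bool × Bool, kAdd p q = kAdd q p := by decide

lemma kAdd_cancel' : ∀ p q : Bool × Bool, kAdd p (kAdd q p) = q := by decide

/-- The twisted duality relation `P(G;λ) = P(G^{δ(e)};λ) − P(G^{δτ(e)};λ)`. -/
theorem stmt7 {E : Type} [Fintype E] [DecidableEq E] (G : RibbonGraph E) (e : E) :
    G.penrose = (G.pdual {e}).penrose - ((G.petrial {e}).pdual {e}).penrose := by
  classical
  have hnot : e ∉ (Finset.univ : Finset E).erase e := Finset.notMem_erase e _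
  have huniv : (Finset.univ : Finset E) = insert e (Finset.univ.erase e) := by
    rw [Finset.insert_erase (Finset.mem_univ e)]
  have expand : ∀ H : RibbonGraph E, H.penrose =
      ∑ A ∈ ((Finset.univ : Finset E).erase e).powerset,
        ((-1 : Polynomial ℤ) ^ A.card * X ^ (H.petrial A).nFaces
          + (-1 : Polynomial ℤ) ^ (insert e A).card * X ^ (H.petrial (insert e A)).nFaces) := by
    intro H
    unfold penrose
    conv_lhs => rw [huniv]
    rw [Finset.sum_powerset_insert hnot, ← Finset.sum_add_distrib]
  rw [expand G, expand (G.pdual {e}), expand ((G.petrial {e}).pdual {e}),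
    ← Finset.sum_sub_distrib]
  refine Finset.sum_congr rfl fun A hA => ?_
  have heA : e ∉ A := fun h =>
    hnot ((Finset.mem_powerset.mp hA) h)
  have hcard : (insert e A).card = A.card + 1 := Finset.card_insert_of_notMem heA
  -- three face-count identities
  have F1 : (G.petrial (insert e A)).nFaces = ((G.pdual {e}).petrial (insert e A)).nFaces := by
    refine nFaces_congr _ _ rfl ?_
    funext e'
    by_cases h : e' = e
    · subst h
      simp [petrial, pdual, kAdd_comm']
    · simp [petrial, pdual, h]
  have F2 : (G.petrial A).nFaces
      = (((G.petrial {e}).pdual {e}).petrial (insert e A)).nFaces := by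
    refine nFaces_congr _ _ rfl ?_
    funext e'
    by_cases h : e' = e
    · subst h
      simp [petrial, pdual, heA, kAdd_cancel']
    · simp [petrial, pdual, h]
  have F3 : ((G.pdual {e}).petrial A).nFaces
      = (((G.petrial {e}).pdual {e}).petrial A).nFaces := by
    refine nFaces_congr _ _ rfl ?_
    funext e'
    by_cases h : e' = e
    · subst h
      simp [petrial, pdual, heA]
    · simp [petrial, pdual, h]
  rw [← F1, ← F2, ← F3, hcard, pow_succ]
  ring

end RibbonGraph

end Penrose
end

section
/- If G is an orientable, checkerboard colourable embedded graph, then P(G;2) = 2^{v(G)}. -/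
open Polynomial

namespace Penrose

namespace RibbonGraph

variable {E : Type}

section Aux

set_option maxHeartbeats 2000000 in
set_option synthInstance.maxHeartbeats 2000000 in
set_option synthInstance.maxSize 1000 in
/-- Local edge analysis: the white-minus-cross factor of an edge, expressed via the
difference `d = c xor c0` with the checkerboard colouring. -/
lemma edge_factor : ∀ (c ce : Bool × Bool → Bool) (a b : Bool × Bool),
    a ≠ (false, false) → b ≠ (false, false) → a ≠ b →
    (∀ p, ce (kAdd p a) = ce p) → (∀ p, ce (kAdd p b) = !ce p) →
    (-(if (∀ p, c (kAdd p (kAdd a b)) = c p) then (1:ℤ) else 0)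
      + (if (∀ p, c (kAdd p a) = c p) then 1 else 0))
    = if (∀ p, xor (c (kAdd p b)) (ce (kAdd p b)) = xor (c p) (ce p)) then
        (if xor (c a) (ce a) = xor (c (false, false)) (ce (false, false)) then 1 else -1)
      else 0 := by decide

set_option maxHeartbeats 2000000 in
set_option synthInstance.maxHeartbeats 2000000 in
set_option synthInstance.maxSize 1000 in
/-- Local edge analysis: summing the indicator of `d ∧ c0` over the four flags of an
edge picks out one flag at each end. -/
lemma edge_sum : ∀ (d ce : Bool × Bool → Bool) (a b : Bool × Bool),
    a ≠ (false, false) → b ≠ (false, false) → a ≠ b →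
    (∀ p, d (kAdd p b) = d p) → (∀ p, ce (kAdd p b) = !ce p) →
    (∑ p : Bool × Bool, (if d p && ce p then (1 : ZMod 2) else 0))
      = (if d (false, false) then 1 else 0) + (if d a then 1 else 0) := by decide

/-- Counting functions constant on the orbits of a pair of maps. -/
lemma sum_boole_orbit {α : Type} [Fintype α] [DecidableEq α] (t u : α → α)
    [DecidablePred fun c : α → Bool => ∀ f, c (t f) = c f ∧ c (u f) = c f] :
    (∑ c : α → Bool, if (∀ f, c (t f) = c f ∧ c (u f) = c f) then (1:ℤ) else 0)
      = 2 ^ Nat.card (Quot (fun x y => y = t x ∨ y = u x)) := by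
  classical
  set R : α → α → Prop := fun x y => y = t x ∨ y = u x with hR
  have hP : ∀ c : α → Bool,
      (∀ f, c (t f) = c f ∧ c (u f) = c f) ↔ (∀ x y, R x y → c x = c y) := by
    intro c
    constructor
    · rintro h x y (rfl | rfl)
      · exact ((h x).1).symm
      · exact ((h x).2).symm
    · intro h f
      exact ⟨(h f _ (Or.inl rfl)).symm, (h f _ (Or.inr rfl)).symm⟩
  haveI : Finite (Quot R) := Finite.of_surjective (Quot.mk R) Quot.mk_surjective
  haveI : Fintype (Quot R) := Fintype.ofFinite _
  have e : (Quot R → Bool) ≃ {c : α → Bool // ∀ f, c (t f) = c f ∧ c (u f) = c f} :=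
  { toFun := fun q => ⟨fun x => q (Quot.mk R x), by
      intro f
      have h1 : Quot.mk R f = Quot.mk R (t f) := Quot.sound (Or.inl rfl)
      have h2 : Quot.mk R f = Quot.mk R (u f) := Quot.sound (Or.inr rfl)
      exact ⟨(congrArg q h1).symm, (congrArg q h2).symm⟩⟩
    invFun := fun c => Quot.lift c.1 (fun x y h => (hP c.1).1 c.2 x y h)
    left_inv := fun q => by
      funext z
      induction z using Quot.ind with
      | _ x => rfl
    right_inv := fun c => rfl }
  have h0 : (∑ c : α → Bool, if (∀ f, c (t f) = c f ∧ c (u f) = c f) then (1:ℤ) else 0)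
      = ((Finset.univ.filter fun c : α → Bool => ∀ f, c (t f) = c f ∧ c (u f) = c f).card : ℤ) :=
    Finset.sum_boole _ _
  rw [h0]
  have h1 : (Finset.univ.filter fun c : α → Bool => ∀ f, c (t f) = c f ∧ c (u f) = c f).card
      = Fintype.card {c : α → Bool // ∀ f, c (t f) = c f ∧ c (u f) = c f} :=
    (Fintype.card_subtype _).symm
  have h2 : Fintype.card {c : α → Bool // ∀ f, c (t f) = c f ∧ c (u f) = c f}
      = 2 ^ Fintype.card (Quot R) := by
    rw [← Fintype.card_congr e, Fintype.card_fun, Fintype.card_bool]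
  rw [h1, h2, Nat.card_eq_fintype_card]
  push_cast
  ring

/-- The parity step: for a vertex-constant `2`-valuation `d` of a checkerboard
colourable ribbon graph, the number of edges whose ends get different values is even. -/
lemma prod_sign_eq_one {E : Type} [Fintype E] [DecidableEq E] (G : RibbonGraph E)
    (c0 : Flags E → Bool)
    (hc0 : ∀ f, c0 (G.σ0 f) = c0 f ∧ c0 (G.s1 f) = c0 f ∧ c0 (G.σ2 f) = !c0 f)
    (d : Flags E → Bool) (hd1 : ∀ f, d (G.s1 f) = d f) (hd2 : ∀ f, d (G.σ2 f) = d f) :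
    ∏ e : E, (if d (e, G.a e) = d (e, (false, false)) then (1:ℤ) else -1) = 1 := by
  classical
  have hfac : ∀ e : E, (if d (e, G.a e) = d (e, (false, false)) then (1:ℤ) else -1)
      = (-1) ^ ((if d (e, (false, false)) then 1 else 0) + (if d (e, G.a e) then 1 else 0)) := by
    intro e
    cases h1 : d (e, (false, false)) <;> cases h2 : d (e, G.a e) <;> simp [h1, h2]
  rw [Finset.prod_congr rfl (fun e _ => hfac e), Finset.prod_pow_eq_pow_sum]
  apply Even.neg_one_pow
  rw [even_iff_two_dvd, ← ZMod.natCast_eq_zero_iff]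
  push_cast
  have he : ∀ e : E, ((if d (e, (false, false)) then (1:ZMod 2) else 0)
        + (if d (e, G.a e) then 1 else 0))
      = ∑ p : Bool × Bool, (if d (e, p) && c0 (e, p) then (1 : ZMod 2) else 0) := by
    intro e
    refine (edge_sum (fun p => d (e, p)) (fun p => c0 (e, p)) (G.a e) (G.b e)
      (G.a_ne e) (G.b_ne e) (G.ab_ne e) (fun p => hd2 (e, p)) (fun p => (hc0 (e, p)).2.2)).symm
  rw [Finset.sum_congr rfl (fun e _ => he e)]
  have flagsum : (∑ fl : Flags E, (if d fl && c0 fl then (1 : ZMod 2) else 0)) = 0 := by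
    refine Finset.sum_ninvolution G.s1 ?_ ?_ (fun a => Finset.mem_univ _) G.s1_invol
    · intro f
      have : (d (G.s1 f) && c0 (G.s1 f)) = (d f && c0 f) := by rw [hd1 f, (hc0 f).2.1]
      rw [this, CharTwo.add_self_eq_zero]
    · intro f _
      exact G.s1_ne f
  exact Eq.trans (Fintype.sum_prod_type (fun fl : Flags E => if d fl && c0 fl then (1 : ZMod 2) else 0)).symm flagsum

end Aux

set_option maxHeartbeats 2000000 in
/-- If `G` is orientable and checkerboard colourable, then `P(G;2) = 2^{v(G)}`. -/
theorem stmt12 {E : Type} [Fintype E] [DecidableEq E] (G : RibbonGraph E)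
    (hor : G.Orientable) (hcb : G.CheckerboardColourable) :
    G.penrose.eval 2 = 2 ^ G.nVerts := by
  clear hor
  obtain ⟨c0, hc0⟩ := hcb
  have step0 : G.penrose.eval 2
      = ∑ A ∈ (Finset.univ : Finset E).powerset, (-1:ℤ) ^ A.card * 2 ^ (G.petrial A).nFaces := by
    simp [penrose, Polynomial.eval_finset_sum]
  have step1 : ∀ A : Finset E, (2:ℤ) ^ (G.petrial A).nFaces
      = ∑ c : Flags E → Bool,
          if (∀ f, c ((G.petrial A).σ0 f) = c f ∧ c (G.s1 f) = c f) then (1:ℤ) else 0 :=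
    fun A => (sum_boole_orbit ((G.petrial A).σ0) G.s1).symm
  have key1 : ∀ A ∈ (Finset.univ : Finset E).powerset, ∀ c : Flags E → Bool,
      ((-1:ℤ) ^ A.card
          * if (∀ f, c ((G.petrial A).σ0 f) = c f ∧ c (G.s1 f) = c f) then (1:ℤ) else 0)
      = (if (∀ f, c (G.s1 f) = c f) then (1:ℤ) else 0) *
          ((∏ e ∈ A, -(if (∀ p, c (e, kAdd p (kAdd (G.a e) (G.b e))) = c (e, p)) then (1:ℤ) else 0)) *
           ∏ e ∈ (Finset.univ : Finset E) \ A, (if (∀ p, c (e, kAdd p (G.a e)) = c (e, p)) then (1:ℤ) else 0)) := by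
    intro A _ c
    by_cases hs1 : ∀ f : Flags E, c (G.s1 f) = c f
    · rw [if_pos hs1, one_mul]
      have hiff : (∀ f, c ((G.petrial A).σ0 f) = c f ∧ c (G.s1 f) = c f)
          ↔ (∀ e : E, if e ∈ A then (∀ p, c (e, kAdd p (kAdd (G.a e) (G.b e))) = c (e, p))
              else (∀ p, c (e, kAdd p (G.a e)) = c (e, p))) := by
        constructor
        · intro h e
          by_cases he : e ∈ A
          · rw [if_pos he]
            intro p
            have h3 := (h (e, p)).1
            simpa [petrial, σ0, he] using h3
          · rw [if_neg he]
            intro p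
            have h3 := (h (e, p)).1
            simpa [petrial, σ0, he] using h3
        · intro h f
          refine ⟨?_, hs1 f⟩
          obtain ⟨e, p⟩ := f
          have h2 := h e
          by_cases he : e ∈ A
          · rw [if_pos he] at h2
            simpa [petrial, σ0, he] using h2 p
          · rw [if_neg he] at h2
            simpa [petrial, σ0, he] using h2 p
      rw [if_congr hiff rfl rfl, ← Fintype.prod_boole]
      have hsplit : ∀ e : E,
          (if (if e ∈ A then (∀ p, c (e, kAdd p (kAdd (G.a e) (G.b e))) = c (e, p))
              else (∀ p, c (e, kAdd p (G.a e)) = c (e, p))) then (1:ℤ) else 0)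
          = if e ∈ A then (if (∀ p, c (e, kAdd p (kAdd (G.a e) (G.b e))) = c (e, p)) then (1:ℤ) else 0) else (if (∀ p, c (e, kAdd p (G.a e)) = c (e, p)) then (1:ℤ) else 0) := by
        intro e
        by_cases he : e ∈ A <;> simp [he]
      rw [Finset.prod_congr rfl (fun e _ => hsplit e),
        ← Finset.prod_sdiff (Finset.subset_univ A)]
      have hA : (∏ e ∈ A, if e ∈ A then (if (∀ p, c (e, kAdd p (kAdd (G.a e) (G.b e))) = c (e, p)) then (1:ℤ) else 0) else (if (∀ p, c (e, kAdd p (G.a e)) = c (e, p)) then (1:ℤ) else 0))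
          = ∏ e ∈ A, (if (∀ p, c (e, kAdd p (kAdd (G.a e) (G.b e))) = c (e, p)) then (1:ℤ) else 0) :=
        Finset.prod_congr rfl (fun e he => if_pos he)
      have hB : (∏ e ∈ (Finset.univ : Finset E) \ A, if e ∈ A then (if (∀ p, c (e, kAdd p (kAdd (G.a e) (G.b e))) = c (e, p)) then (1:ℤ) else 0) else (if (∀ p, c (e, kAdd p (G.a e)) = c (e, p)) then (1:ℤ) else 0))
          = ∏ e ∈ (Finset.univ : Finset E) \ A, (if (∀ p, c (e, kAdd p (G.a e)) = c (e, p)) then (1:ℤ) else 0) :=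
        Finset.prod_congr rfl (fun e he => if_neg (Finset.mem_sdiff.1 he).2)
      rw [hA, hB]
      have hneg : (∏ e ∈ A, -(if (∀ p, c (e, kAdd p (kAdd (G.a e) (G.b e))) = c (e, p)) then (1:ℤ) else 0))
          = (-1:ℤ) ^ A.card * ∏ e ∈ A, (if (∀ p, c (e, kAdd p (kAdd (G.a e) (G.b e))) = c (e, p)) then (1:ℤ) else 0) := by
        calc (∏ e ∈ A, -(if (∀ p, c (e, kAdd p (kAdd (G.a e) (G.b e))) = c (e, p)) then (1:ℤ) else 0))
            = ∏ e ∈ A, (-1) * (if (∀ p, c (e, kAdd p (kAdd (G.a e) (G.b e))) = c (e, p)) then (1:ℤ) else 0) :=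
              Finset.prod_congr rfl (fun e _ => (neg_one_mul _).symm)
          _ = (∏ _e ∈ A, (-1:ℤ)) * ∏ e ∈ A, (if (∀ p, c (e, kAdd p (kAdd (G.a e) (G.b e))) = c (e, p)) then (1:ℤ) else 0) := Finset.prod_mul_distrib
          _ = (-1:ℤ) ^ A.card * ∏ e ∈ A, (if (∀ p, c (e, kAdd p (kAdd (G.a e) (G.b e))) = c (e, p)) then (1:ℤ) else 0) := by rw [Finset.prod_const]
      rw [hneg]
      ring
    · rw [if_neg hs1, zero_mul, if_neg (fun h => hs1 (fun f => (h f).2)), mul_zero]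
  rw [step0]
  calc (∑ A ∈ (Finset.univ : Finset E).powerset, (-1:ℤ) ^ A.card * 2 ^ (G.petrial A).nFaces)
      = ∑ A ∈ (Finset.univ : Finset E).powerset, ∑ c : Flags E → Bool,
          ((-1:ℤ) ^ A.card
            * if (∀ f, c ((G.petrial A).σ0 f) = c f ∧ c (G.s1 f) = c f) then (1:ℤ) else 0) := by
        refine Finset.sum_congr rfl (fun A _ => ?_)
        rw [step1 A, Finset.mul_sum]
    _ = ∑ c : Flags E → Bool, ∑ A ∈ (Finset.univ : Finset E).powerset,
          ((if (∀ f, c (G.s1 f) = c f) then (1:ℤ) else 0) *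
            ((∏ e ∈ A, -(if (∀ p, c (e, kAdd p (kAdd (G.a e) (G.b e))) = c (e, p)) then (1:ℤ) else 0)) *
             ∏ e ∈ (Finset.univ : Finset E) \ A, (if (∀ p, c (e, kAdd p (G.a e)) = c (e, p)) then (1:ℤ) else 0))) := by
        rw [Finset.sum_congr rfl (fun A hA => Finset.sum_congr rfl (fun c _ => key1 A hA c))]
        exact Finset.sum_comm
    _ = ∑ c : Flags E → Bool, (if (∀ f, c (G.s1 f) = c f) then (1:ℤ) else 0)
          * ∏ e : E, (-(if (∀ p, c (e, kAdd p (kAdd (G.a e) (G.b e))) = c (e, p)) then (1:ℤ) else 0) + (if (∀ p, c (e, kAdd p (G.a e)) = c (e, p)) then (1:ℤ) else 0)) := by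
        refine Finset.sum_congr rfl (fun c _ => ?_)
        rw [← Finset.mul_sum, Finset.prod_add]
    _ = ∑ c : Flags E → Bool,
          (if ((∀ f, c (G.s1 f) = c f)
              ∧ (∀ f, xor (c (G.σ2 f)) (c0 (G.σ2 f)) = xor (c f) (c0 f)))
            then (1:ℤ) else 0) := by
        refine Finset.sum_congr rfl (fun c _ => ?_)
        by_cases hs1 : ∀ f : Flags E, c (G.s1 f) = c f
        · rw [if_pos hs1, one_mul]
          by_cases hd2 : ∀ f : Flags E, xor (c (G.σ2 f)) (c0 (G.σ2 f)) = xor (c f) (c0 f)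
          · rw [if_pos ⟨hs1, hd2⟩]
            have hedge : ∀ e : E, (-(if (∀ p, c (e, kAdd p (kAdd (G.a e) (G.b e))) = c (e, p)) then (1:ℤ) else 0) + (if (∀ p, c (e, kAdd p (G.a e)) = c (e, p)) then (1:ℤ) else 0))
                = (if xor (c (e, G.a e)) (c0 (e, G.a e))
                    = xor (c (e, (false, false))) (c0 (e, (false, false))) then (1:ℤ) else -1) := by
              intro e
              have h := edge_factor (fun p => c (e, p)) (fun p => c0 (e, p)) (G.a e) (G.b e)
                (G.a_ne e) (G.b_ne e) (G.ab_ne e) (fun p => (hc0 (e, p)).1)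
                (fun p => (hc0 (e, p)).2.2)
              rw [h]
              exact if_pos (fun p => hd2 (e, p))
            rw [Finset.prod_congr rfl (fun e _ => hedge e)]
            exact prod_sign_eq_one G c0 hc0 (fun f => xor (c f) (c0 f))
              (fun f => by simp only [hs1 f, (hc0 f).2.1]) hd2
          · rw [if_neg (fun h => hd2 h.2)]
            push_neg at hd2
            obtain ⟨f0, hf0⟩ := hd2
            refine Finset.prod_eq_zero (Finset.mem_univ f0.1) ?_
            have h := edge_factor (fun p => c (f0.1, p)) (fun p => c0 (f0.1, p)) (G.a f0.1)
              (G.b f0.1) (G.a_ne f0.1) (G.b_ne f0.1) (G.ab_ne f0.1)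
              (fun p => (hc0 (f0.1, p)).1) (fun p => (hc0 (f0.1, p)).2.2)
            rw [h]
            exact if_neg (fun hall => hf0 (hall f0.2))
        · rw [if_neg hs1, zero_mul, if_neg (fun h => hs1 h.1)]
    _ = ∑ d : Flags E → Bool,
          (if ((∀ f, d (G.s1 f) = d f) ∧ (∀ f, d (G.σ2 f) = d f)) then (1:ℤ) else 0) := by
        have hinv : Function.Involutive (fun c : Flags E → Bool => fun f => xor (c f) (c0 f)) := by
          intro c; funext f; simp
        refine Fintype.sum_equiv hinv.toPerm _ _ (fun c => ?_)
        simp only [Function.Involutive.coe_toPerm]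
        refine if_congr (and_congr ?_ Iff.rfl) rfl rfl
        constructor
        · intro hh f
          rw [hh f, (hc0 f).2.1]
        · intro hh f
          have h2 := hh f
          rw [(hc0 f).2.1] at h2
          have h3 := congrArg (fun x => xor x (c0 f)) h2
          simpa using h3
    _ = 2 ^ G.nVerts := by
        have h : (∑ d : Flags E → Bool,
            if (∀ f, d (G.σ2 f) = d f ∧ d (G.s1 f) = d f) then (1:ℤ) else 0)
            = 2 ^ G.nVerts := sum_boole_orbit G.σ2 G.s1
        rw [← h]
        refine Finset.sum_congr rfl (fun d _ => if_congr ?_ rfl rfl)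
        rw [forall_and]
        exact and_comm


end RibbonGraph

end Penrose
end
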